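/- Let d ≥ 2 and N ≥ 3, and let Q_0, Q_1, …, Q_{d−1} be nonzero complex polynomials ordered so that deg Q_0 ≤ deg Q_1 ≤ ⋯ ≤ deg Q_{d−1}. Define φ(α) = (Q_0(α), Q_1(α), …, Q_{d−1}(α)) ∈ ℂ^d and let 𝒱 = span{ φ(α) ⊗ ψ_2(α) ⊗ ⋯ ⊗ ψ_N(α) : α ∈ ℂ } ⊆ (ℂ^d)^{⊗N}. If the orthogonal complement of 𝒱 is a genuinely entangled subspace, then its dimension is at most d^{N−2}(d−1)². -/

import Mathlib

noncomputable section

/-- The `N`-qudit Hilbert space `(ℂ^d)^{⊗N}`, realized as the Euclidean space whose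
coordinates are indexed by tuples of local indices. -/
abbrev QSpace (N d : ℕ) := EuclideanSpace ℂ (Fin N → Fin d)

/-- `v` is biproduct: for some bipartition `S|Sᶜ` of the parties, `v = φ ⊗ χ` with
`φ` a vector on the parties in `S` and `χ` a vector on the parties in `Sᶜ`
(under the canonical factor-reordering isomorphism). -/
def Biproduct {N d : ℕ} (v : QSpace N d) : Prop :=
  ∃ S : Set (Fin N), S.Nonempty ∧ S ≠ Set.univ ∧
    ∃ (φ : ((i : S) → Fin d) → ℂ) (χ : ((i : ↥Sᶜ) → Fin d) → ℂ),
      ∀ f : Fin N → Fin d, v f = φ (fun i => f i) * χ (fun i => f i)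

/-- A vector is genuinely multiparty entangled if it is nonzero and not biproduct. -/
def GME {N d : ℕ} (v : QSpace N d) : Prop :=
  v ≠ 0 ∧ ¬ Biproduct v

/-- A genuinely entangled subspace: all its nonzero vectors are GME. -/
def IsGES {N d : ℕ} (G : Submodule ℂ (QSpace N d)) : Prop :=
  ∀ v ∈ G, v ≠ 0 → GME v

/-- The fully product vector `ψ₁(α) ⊗ ψ₂(α) ⊗ ⋯ ⊗ ψ_N(α)`, where the first-party vector
`ψ₁(α)` has coordinates `v1 α` and, for `k = 2, …, N` (i.e. party index `i = k - 1 ≥ 1`),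
`ψ_k(α) = (1, α^{d^{N-k}}, α^{2·d^{N-k}}, …, α^{(d-1)·d^{N-k}})`. -/
def PsiFam (N d : ℕ) (v1 : ℂ → Fin d → ℂ) (α : ℂ) : QSpace N d :=
  WithLp.toLp 2 (fun f => ∏ i : Fin N,
    if (i : ℕ) = 0 then v1 α (f i)
    else α ^ ((f i : ℕ) * d ^ (N - 1 - (i : ℕ))))


open Polynomial Module

namespace Stmt6Aux

variable (d n : ℕ)

/-- The exponent of `α` in the coordinate `f` of the product vector (excluding party `1`). -/
def eE (f : Fin (n+3) → Fin d) : ℕ :=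
  ∑ i : Fin (n+3), if (i : ℕ) = 0 then 0 else (f i : ℕ) * d ^ (n + 2 - (i : ℕ))

/-- Decoding the base-`d` digits of `eE` from `f`. -/
def dec2 (f : Fin (n+3) → Fin d) : Fin (n+2) → Fin d :=
  fun t => f ⟨n + 2 - (t : ℕ), by omega⟩

/-- Encoding a first coordinate and digit string into `f`. -/
def Fenc (j : Fin d) (g : Fin (n+2) → Fin d) : Fin (n+3) → Fin d :=
  fun i => if h : (i : ℕ) = 0 then j else g ⟨n + 2 - (i : ℕ), by have := i.isLt; omega⟩

lemma Fenc_zero (j : Fin d) (g : Fin (n+2) → Fin d) : Fenc d n j g 0 = j := by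
  simp [Fenc]

lemma Fenc_apply_ne (j : Fin d) (g : Fin (n+2) → Fin d) (i : Fin (n+3)) (hi : (i : ℕ) ≠ 0) :
    Fenc d n j g i = g ⟨n + 2 - (i : ℕ), by have := i.isLt; omega⟩ :=
  dif_neg hi

lemma dec2_Fenc (j : Fin d) (g : Fin (n+2) → Fin d) : dec2 d n (Fenc d n j g) = g := by
  funext t
  have ht := t.isLt
  rw [dec2, Fenc_apply_ne d n j g _ (by simp; omega)]
  congr 1
  ext
  simp
  omega

lemma eE_eq (f : Fin (n+3) → Fin d) :
    eE d n f = ∑ t : Fin (n+2), (dec2 d n f t : ℕ) * d ^ (t : ℕ) := by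
  have step1 : eE d n f = ∑ i : Fin (n+2), (f i.succ : ℕ) * d ^ (n + 2 - ((i : ℕ) + 1)) := by
    rw [eE, Fin.sum_univ_succ]
    simp [Fin.val_succ]
  rw [step1]
  apply Fintype.sum_bijective Fin.rev Fin.rev_bijective
  intro i
  have hi := i.isLt
  have h1 : ((Fin.rev i : Fin (n+2)) : ℕ) = n + 1 - (i : ℕ) := by
    rw [Fin.val_rev]; omega
  rw [dec2]
  have h2 : (n + 2 : ℕ) - ((Fin.rev i : Fin (n+2)) : ℕ) = (i : ℕ) + 1 := by
    rw [Fin.val_rev]; omega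
  congr 1
  · congr 1
    congr 1
    ext
    simp [Fin.val_succ, h1]
    omega


/-- The exponent encoded by digits `g` (with top digit implicitly `0`). -/
def Epow (g : Fin (n+1) → Fin d) : ℕ := ∑ t : Fin (n+1), (g t : ℕ) * d ^ (t : ℕ)

lemma Epow_lt (g : Fin (n+1) → Fin d) : Epow d n g < d ^ (n+1) := by
  rw [Epow, ← finFunctionFinEquiv_apply]
  exact (finFunctionFinEquiv g).isLt

/-- Padding a digit string with a `0` top digit. -/
def pad [NeZero d] (g : Fin (n+1) → Fin d) : Fin (n+2) → Fin d :=
  fun k => if h : (k : ℕ) < n + 1 then g ⟨k, h⟩ else 0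

lemma pad_apply_lt [NeZero d] (g : Fin (n+1) → Fin d) (k : Fin (n+2)) (h : (k : ℕ) < n + 1) :
    pad d n g k = g ⟨k, h⟩ := dif_pos h

lemma pad_apply_not [NeZero d] (g : Fin (n+1) → Fin d) (k : Fin (n+2)) (h : ¬ (k : ℕ) < n + 1) :
    pad d n g k = 0 := dif_neg h

lemma pad_sum [NeZero d] (g : Fin (n+1) → Fin d) :
    ∑ t : Fin (n+2), (pad d n g t : ℕ) * d ^ (t : ℕ) = Epow d n g := by
  rw [Fin.sum_univ_castSucc, Epow]
  have hlast : (pad d n g (Fin.last (n+1)) : ℕ) = 0 := by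
    rw [pad_apply_not d n g _ (by simp)]
    rfl
  rw [hlast]
  simp only [zero_mul, add_zero]
  refine Finset.sum_congr rfl fun t _ => ?_
  rw [pad_apply_lt d n g t.castSucc (show ((t.castSucc : Fin (n+2)) : ℕ) < n + 1 from t.isLt)]
  rfl

def fenc2 [NeZero d] (j : Fin d) (g : Fin (n+1) → Fin d) : Fin (n+3) → Fin d :=
  Fenc d n j (pad d n g)

lemma fenc2_zero [NeZero d] (j : Fin d) (g : Fin (n+1) → Fin d) : fenc2 d n j g 0 = j :=
  Fenc_zero d n j _

lemma fenc2_one [NeZero d] (j : Fin d) (g : Fin (n+1) → Fin d) :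
    fenc2 d n j g ⟨1, by omega⟩ = 0 := by
  rw [fenc2, Fenc_apply_ne d n j _ _ (by simp)]
  exact pad_apply_not d n g _ (by simp)

lemma eE_fenc2 [NeZero d] (j : Fin d) (g : Fin (n+1) → Fin d) :
    eE d n (fenc2 d n j g) = Epow d n g := by
  rw [eE_eq, fenc2, dec2_Fenc, pad_sum]

def dec1 (f : Fin (n+3) → Fin d) : Fin (n+1) → Fin d :=
  fun t => f ⟨n + 2 - (t : ℕ), by omega⟩

lemma dec1_fenc2 [NeZero d] (j : Fin d) (g : Fin (n+1) → Fin d) :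
    dec1 d n (fenc2 d n j g) = g := by
  funext t
  have ht := t.isLt
  rw [dec1, fenc2, Fenc_apply_ne d n j _ _ (by simp; omega)]
  rw [pad_apply_lt d n g _ (by simp; omega)]
  congr 1
  ext
  simp
  omega

lemma fenc2_dec1 [NeZero d] (f : Fin (n+3) → Fin d) (hf : f ⟨1, by omega⟩ = 0) :
    fenc2 d n (f 0) (dec1 d n f) = f := by
  funext i
  have hilt := i.isLt
  by_cases hi : (i : ℕ) = 0
  · rw [fenc2, Fenc, dif_pos hi]
    congr 1
    ext
    simp [hi]
  · rw [fenc2, Fenc_apply_ne d n _ _ _ hi]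
    by_cases h2 : (i : ℕ) = 1
    · rw [pad_apply_not d n _ _ (by simp; omega)]
      rw [← hf]
      congr 1
      ext
      simp [h2]
    · rw [pad_apply_lt d n _ _ (by simp; omega)]
      rw [dec1]
      congr 1
      ext
      simp
      omega

lemma exists_f (j : Fin d) (m : ℕ) (hm : m < d ^ (n+2)) :
    ∃ f : Fin (n+3) → Fin d, f 0 = j ∧ eE d n f = m := by
  refine ⟨Fenc d n j (finFunctionFinEquiv.symm ⟨m, hm⟩), Fenc_zero d n j _, ?_⟩
  rw [eE_eq, dec2_Fenc, ← finFunctionFinEquiv_apply, Equiv.apply_symm_apply]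

/-- Key dimension-counting lemma: if `W` contains `X^t • U` for all `t ≤ s`, where `U` has a
(nonzero) element of maximal degree, then `dim W ≥ dim U + s`. -/
lemma lemA (U : Submodule ℂ (Polynomial ℂ)) (u₀ : Polynomial ℂ) (hu₀U : u₀ ∈ U)
    (hu₀ : u₀ ≠ 0) (hmax : ∀ p ∈ U, p.degree ≤ u₀.degree) :
    ∀ (s : ℕ) (W : Submodule ℂ (Polynomial ℂ)), FiniteDimensional ℂ W →
      (∀ t ≤ s, ∀ p ∈ U, (X : Polynomial ℂ) ^ t * p ∈ W) →
      Module.finrank ℂ U + s ≤ Module.finrank ℂ W := by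
  intro s
  induction s with
  | zero =>
    intro W hW hsub
    haveI := hW
    have hUW : U ≤ W := fun p hp => by simpa using hsub 0 le_rfl p hp
    simpa using Submodule.finrank_mono hUW
  | succ s ih =>
    intro W hW hsub
    haveI := hW
    set w : Polynomial ℂ := (X : Polynomial ℂ) ^ (s+1) * u₀ with hw_def
    set W' : Submodule ℂ (Polynomial ℂ) :=
      W ⊓ Polynomial.degreeLE ℂ ((u₀.natDegree + s : ℕ) : WithBot ℕ) with hW'_def
    haveI : FiniteDimensional ℂ W' := Submodule.finiteDimensional_of_le inf_le_left
    have hsub' : ∀ t ≤ s, ∀ p ∈ U, (X : Polynomial ℂ) ^ t * p ∈ W' := by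
      intro t ht p hp
      refine ⟨hsub t (by omega) p hp, Polynomial.mem_degreeLE.mpr ?_⟩
      calc ((X : Polynomial ℂ) ^ t * p).degree
          ≤ ((X : Polynomial ℂ) ^ t).degree + p.degree := Polynomial.degree_mul_le _ _
        _ ≤ (t : WithBot ℕ) + u₀.degree := by
            rw [Polynomial.degree_X_pow]
            exact add_le_add le_rfl (hmax p hp)
        _ = ((t + u₀.natDegree : ℕ) : WithBot ℕ) := by
            rw [Polynomial.degree_eq_natDegree hu₀, ← Nat.cast_add]
        _ ≤ ((u₀.natDegree + s : ℕ) : WithBot ℕ) :=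
            Nat.cast_le.mpr (show t + u₀.natDegree ≤ u₀.natDegree + s by omega)
    have h1 := ih W' ‹_› hsub'
    have hwW : w ∈ W := hsub (s+1) le_rfl u₀ hu₀U
    have hdeg_w : w.degree = ((s + 1 + u₀.natDegree : ℕ) : WithBot ℕ) := by
      rw [hw_def, Polynomial.degree_mul, Polynomial.degree_X_pow,
        Polynomial.degree_eq_natDegree hu₀, ← Nat.cast_add]
    have hnot : w ∉ W' := by
      intro hmem'
      rw [hW'_def, Submodule.mem_inf] at hmem'
      have hmem := hmem'.2
      rw [Polynomial.mem_degreeLE, hdeg_w, Nat.cast_le] at hmem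
      omega
    have hle : W' ⊔ (Submodule.span ℂ {w}) ≤ W := by
      refine sup_le inf_le_left ?_
      rw [Submodule.span_singleton_le_iff_mem]
      exact hwW
    haveI : FiniteDimensional ℂ ↥(W' ⊔ (Submodule.span ℂ {w})) :=
      Submodule.finiteDimensional_of_le hle
    have hlt : W' < W' ⊔ (Submodule.span ℂ {w}) := by
      refine lt_of_le_of_ne le_sup_left ?_
      intro hEq
      exact hnot (hEq ▸ Submodule.mem_sup_right (Submodule.mem_span_singleton_self w))
    have h2 : Module.finrank ℂ W' < Module.finrank ℂ ↥(W' ⊔ (Submodule.span ℂ {w})) :=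
      Submodule.finrank_lt_finrank_of_lt hlt
    have h3 : Module.finrank ℂ ↥(W' ⊔ (Submodule.span ℂ {w})) ≤ Module.finrank ℂ W :=
      Submodule.finrank_mono hle
    omega

end Stmt6Aux

open Polynomial Module Stmt6Aux in
/-- Let `Q_0, …, Q_{d-1}` be nonzero polynomials with nondecreasing degrees,
`φ(α) = (Q_0(α), …, Q_{d-1}(α))`, and `𝒱 = span{φ(α) ⊗ ψ₂(α) ⊗ ⋯ ⊗ ψ_N(α) : α ∈ ℂ}`.
If `𝒱ᗮ` is a genuinely entangled subspace, then `dim 𝒱ᗮ ≤ d^{N-2}(d-1)²`. -/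
theorem stmt6 (N d : ℕ) (hd : 2 ≤ d) (hN : 3 ≤ N)
    (Q : Fin d → Polynomial ℂ) (hQ : ∀ j, Q j ≠ 0)
    (hdeg : Monotone fun j => (Q j).degree)
    (hGES : IsGES (Submodule.span ℂ (Set.range
      (PsiFam N d (fun α j => (Q j).eval α))))ᗮ) :
    Module.finrank ℂ (Submodule.span ℂ (Set.range
      (PsiFam N d (fun α j => (Q j).eval α))))ᗮ
        ≤ d ^ (N - 2) * (d - 1) ^ 2 := by
  classical
  obtain ⟨n, rfl⟩ : ∃ n, N = n + 3 := ⟨N - 3, by omega⟩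
  haveI : NeZero d := ⟨by omega⟩
  set Ψ : ℂ → QSpace (n+3) d := PsiFam (n+3) d (fun α j => (Q j).eval α) with hΨ
  set Rb : (Fin (n+3) → Fin d) → Polynomial ℂ :=
    fun f => (Q (f 0)).map (starRingEnd ℂ) * Polynomial.X ^ (Stmt6Aux.eE d n f) with hRb
  -- the coordinates of `Ψ α` are evaluations of polynomials
  have hEE : ∀ f : Fin (n+3) → Fin d,
      eE d n f = ∑ i : Fin (n+2), (f i.succ : ℕ) * d ^ (n + 2 - ((i : ℕ) + 1)) := by
    intro f
    rw [eE, Fin.sum_univ_succ]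
    simp [Fin.val_succ]
  have hPsiEval : ∀ (α : ℂ) f, Ψ α f = Polynomial.eval α (Q (f 0) * X ^ (eE d n f)) := by
    intro α f
    have h1 : Ψ α f = ((Q (f 0)).eval α) *
        ∏ i : Fin (n+2), α ^ ((f i.succ : ℕ) * d ^ (n + 3 - 1 - ((i : ℕ) + 1))) := by
      rw [hΨ, PsiFam]
      simp only [WithLp.ofLp_toLp]
      rw [Fin.prod_univ_succ]
      simp [Fin.val_succ]
    rw [h1, Finset.prod_pow_eq_pow_sum, Polynomial.eval_mul, Polynomial.eval_pow,
      Polynomial.eval_X]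
    congr 1
    rw [hEE f]
    congr 1
  -- the linear map sending `v` to the polynomial `∑ f, v f • conj (R f)`
  set Φ : QSpace (n+3) d →ₗ[ℂ] Polynomial ℂ :=
    { toFun := fun v => ∑ f, v f • Rb f
      map_add' := by
        intro u v
        simp [add_smul, Finset.sum_add_distrib]
      map_smul' := by
        intro c v
        simp [smul_smul, Finset.smul_sum] } with hΦ
  have hΦapply : ∀ v : QSpace (n+3) d, Φ v = ∑ f, v f • Rb f := fun v => rfl
  have hconj : ∀ (α : ℂ) f,
      (starRingEnd ℂ) (Ψ α f) = Polynomial.eval ((starRingEnd ℂ) α) (Rb f) := by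
    intro α f
    rw [hPsiEval, Polynomial.eval_mul, Polynomial.eval_pow, Polynomial.eval_X, map_mul, map_pow]
    rw [hRb]
    rw [Polynomial.eval_mul, Polynomial.eval_pow, Polynomial.eval_X]
    congr 1
    rw [Polynomial.eval_map, Polynomial.eval₂_at_apply]
  have hinner : ∀ (α : ℂ) (v : QSpace (n+3) d),
      (inner ℂ (Ψ α) v : ℂ) = Polynomial.eval ((starRingEnd ℂ) α) (Φ v) := by
    intro α v
    rw [hΦapply, Polynomial.eval_finset_sum, PiLp.inner_apply]
    refine Finset.sum_congr rfl fun f _ => ?_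
    rw [RCLike.inner_apply, hconj α f, Polynomial.eval_smul, smul_eq_mul]
  have hker : (Submodule.span ℂ (Set.range Ψ))ᗮ = LinearMap.ker Φ := by
    ext v
    rw [Submodule.mem_orthogonal, LinearMap.mem_ker]
    constructor
    · intro h
      refine Polynomial.zero_of_eval_zero _ fun β => ?_
      have h2 := h (Ψ ((starRingEnd ℂ) β)) (Submodule.subset_span ⟨_, rfl⟩)
      rw [hinner] at h2
      simpa using h2
    · intro h u hu
      induction hu using Submodule.span_induction with
      | mem x hx =>
        obtain ⟨α, rfl⟩ := hx
        rw [hinner, h]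
        simp
      | zero => simp
      | add x y hx hy ihx ihy => rw [inner_add_left, ihx, ihy]; ring
      | smul a x hx ihx => rw [inner_smul_left, ihx]; ring
  -- the key independent family obtained from genuine entanglement across the cut `{2}|rest`
  set Bf : (Fin d × (Fin (n+1) → Fin d)) → Polynomial ℂ :=
    fun p => (Q p.1).map (starRingEnd ℂ) * Polynomial.X ^ (Epow d n p.2) with hBf
  set i1 : Fin (n+3) := ⟨1, by omega⟩ with hi1
  have hRb_fenc2 : ∀ (j : Fin d) (g : Fin (n+1) → Fin d),
      Rb (fenc2 d n j g) = Bf (j, g) := by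
    intro j g
    rw [hRb, hBf]
    simp only
    rw [fenc2_zero, eE_fenc2]
  have li : LinearIndependent ℂ Bf := by
    rw [Fintype.linearIndependent_iff]
    intro γ hγ p₀
    by_contra hne
    set v : QSpace (n+3) d :=
      WithLp.toLp 2 (fun f => if f i1 = 0 then γ (f 0, dec1 d n f) else 0) with hv
    have hv_apply : ∀ p : Fin d × (Fin (n+1) → Fin d), v (fenc2 d n p.1 p.2) = γ p := by
      rintro ⟨j, g⟩
      show (if fenc2 d n j g i1 = 0 then γ (fenc2 d n j g 0, dec1 d n (fenc2 d n j g)) else 0) = _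
      rw [hi1, fenc2_one, if_pos rfl, fenc2_zero, dec1_fenc2]
    have hvmem : v ∈ (Submodule.span ℂ (Set.range Ψ))ᗮ := by
      rw [hker, LinearMap.mem_ker, hΦapply]
      have step1 : ∑ f, v f • Rb f
          = ∑ f ∈ Finset.univ.filter (fun f => f i1 = 0), γ (f 0, dec1 d n f) • Rb f := by
        rw [Finset.sum_filter]
        refine Finset.sum_congr rfl fun f _ => ?_
        show (if f i1 = 0 then γ (f 0, dec1 d n f) else 0) • Rb f = _
        split_ifs with h
        · rfl
        · rw [zero_smul]
      rw [step1, ← hγ]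
      refine Finset.sum_nbij' (fun f => (f 0, dec1 d n f)) (fun p => fenc2 d n p.1 p.2)
        (fun f _ => Finset.mem_univ _) ?_ ?_ ?_ ?_
      · intro p _
        rw [Finset.mem_filter]
        exact ⟨Finset.mem_univ _, by rw [hi1]; exact fenc2_one d n p.1 p.2⟩
      · intro f hf
        rw [Finset.mem_filter] at hf
        exact fenc2_dec1 d n f (by rw [← hi1]; exact hf.2)
      · intro p _
        show (fenc2 d n p.1 p.2 0, dec1 d n (fenc2 d n p.1 p.2)) = p
        rw [fenc2_zero, dec1_fenc2]
      · intro f hf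
        rw [Finset.mem_filter] at hf
        have hfe : fenc2 d n (f 0) (dec1 d n f) = f := fenc2_dec1 d n f (by rw [← hi1]; exact hf.2)
        show γ (f 0, dec1 d n f) • Rb f = γ (f 0, dec1 d n f) • Bf (f 0, dec1 d n f)
        congr 1
        rw [← hRb_fenc2, hfe]
    have hvne : v ≠ 0 := by
      intro h0
      apply hne
      have := hv_apply p₀
      rw [h0] at this
      exact this.symm
    obtain ⟨-, hnb⟩ := hGES v hvmem hvne
    apply hnb
    refine ⟨({i1} : Set (Fin (n+3)))ᶜ, ⟨0, by simp [hi1, Fin.ext_iff]⟩, ?_, ?_⟩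
    · intro huniv
      have : i1 ∈ ({i1} : Set (Fin (n+3)))ᶜ := huniv ▸ Set.mem_univ _
      simp at this
    · refine ⟨(fun h => v (fun i => if hi : i = i1 then 0 else
          h ⟨i, by simp [Set.mem_compl_singleton_iff, hi]⟩)),
        (fun h => if h ⟨i1, by simp⟩ = 0 then 1 else 0), ?_⟩
      intro f
      by_cases hf : f i1 = 0
      · have hres : (fun i => if hi : i = i1 then (0 : Fin d) else f i) = f := by
          funext i
          split_ifs with h
          · rw [h, hf]
          · rfl
        show v f = v (fun i => if hi : i = i1 then 0 else f i) * (if f i1 = 0 then 1 else 0)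
        rw [hres, if_pos hf, mul_one]
      · show v f = v (fun i => if hi : i = i1 then 0 else f i) * (if f i1 = 0 then 1 else 0)
        rw [if_neg hf, mul_zero]
        show (if f i1 = 0 then γ (f 0, dec1 d n f) else 0) = 0
        rw [if_neg hf]
  -- now apply the dimension-counting lemma
  set U : Submodule ℂ (Polynomial ℂ) := Submodule.span ℂ (Set.range Bf) with hU
  have hUrank : Module.finrank ℂ U = d ^ (n+2) := by
    rw [hU, finrank_span_eq_card li]
    simp only [Fintype.card_prod, Fintype.card_fun, Fintype.card_fin]
    ring
  set jmax : Fin d := ⟨d - 1, by omega⟩ with hjmax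
  set u₀ : Polynomial ℂ := Bf (jmax, fun _ => jmax) with hu₀def
  have hQdmap : ∀ j : Fin d, ((Q j).map (starRingEnd ℂ)).degree = (Q j).degree :=
    fun j => Polynomial.degree_map_eq_of_injective (RingHom.injective _) _
  have hmax : ∀ p ∈ U, p.degree ≤ u₀.degree := by
    have hle : U ≤ Polynomial.degreeLE ℂ u₀.degree := by
      rw [hU, Submodule.span_le]
      rintro _ ⟨⟨j, g⟩, rfl⟩
      rw [SetLike.mem_coe, Polynomial.mem_degreeLE]
      show (Bf (j, g)).degree ≤ (Bf (jmax, fun _ => jmax)).degree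
      rw [hBf]
      simp only
      rw [Polynomial.degree_mul, Polynomial.degree_mul, Polynomial.degree_X_pow,
        Polynomial.degree_X_pow, hQdmap, hQdmap]
      refine add_le_add (hdeg ?_) (Nat.cast_le.mpr ?_)
      · show j ≤ jmax
        rw [Fin.le_def, hjmax]
        have := j.isLt
        simp
        omega
      · rw [Epow, Epow]
        refine Finset.sum_le_sum fun t _ => ?_
        refine Nat.mul_le_mul_right _ ?_
        have := (g t).isLt
        rw [hjmax]
        simp
        omega
    intro p hp
    exact Polynomial.mem_degreeLE.mp (hle hp)
  have hu₀ : u₀ ≠ 0 := by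
    rw [hu₀def, hBf]
    exact mul_ne_zero ((Polynomial.map_ne_zero_iff (RingHom.injective _)).mpr (hQ _))
      (pow_ne_zero _ Polynomial.X_ne_zero)
  have hu₀U : u₀ ∈ U := Submodule.subset_span ⟨_, rfl⟩
  have hdpow : d ^ (n+1) ≤ d ^ (n+2) := Nat.pow_le_pow_right (by omega) (by omega)
  have hsub : ∀ t ≤ d ^ (n+2) - d ^ (n+1), ∀ p ∈ U,
      (Polynomial.X : Polynomial ℂ) ^ t * p ∈ LinearMap.range Φ := by
    intro t ht p hp
    induction hp using Submodule.span_induction with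
    | mem x hx =>
      obtain ⟨⟨j, g⟩, rfl⟩ := hx
      have hE : Epow d n g < d ^ (n+1) := Epow_lt d n g
      have hm : Epow d n g + t < d ^ (n+2) := by omega
      obtain ⟨f, hf0, hfe⟩ := exists_f d n j _ hm
      refine LinearMap.mem_range.mpr ⟨EuclideanSpace.single f 1, ?_⟩
      rw [hΦapply]
      have hsingle : ∀ f' : Fin (n+3) → Fin d,
          (EuclideanSpace.single f 1 : QSpace (n+3) d) f' • Rb f'
            = if f' = f then Rb f' else 0 := by
        intro f'
        rw [EuclideanSpace.single_apply]
        split_ifs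
        · rw [one_smul]
        · rw [zero_smul]
      rw [Finset.sum_congr rfl fun f' _ => hsingle f']
      rw [Finset.sum_ite_eq' Finset.univ f Rb, if_pos (Finset.mem_univ f)]
      rw [hRb, hBf]
      simp only
      rw [hf0, hfe, pow_add]
      ring
    | zero =>
      rw [mul_zero]
      exact zero_mem _
    | add x y hx hy ihx ihy =>
      rw [mul_add]
      exact add_mem ihx ihy
    | smul a x hx ihx =>
      rw [mul_smul_comm]
      exact Submodule.smul_mem _ _ ihx
  have hlem := lemA U u₀ hu₀U hu₀ hmax (d ^ (n+2) - d ^ (n+1)) (LinearMap.range Φ)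
    inferInstance hsub
  rw [hUrank] at hlem
  have hrn := LinearMap.finrank_range_add_finrank_ker Φ
  rw [finrank_euclideanSpace] at hrn
  have hcard : Fintype.card (Fin (n+3) → Fin d) = d ^ (n+3) := by
    simp [Fintype.card_fun]
  rw [hcard] at hrn
  rw [hker]
  -- final arithmetic
  obtain ⟨c, rfl⟩ : ∃ c, d = c + 2 := ⟨d - 2, by omega⟩
  have hgoal : (c + 2) ^ (n + 3 - 2) * (c + 2 - 1) ^ 2 = (c + 2) ^ (n + 1) * (c + 1) ^ 2 := by
    rw [show n + 3 - 2 = n + 1 from by omega, show c + 2 - 1 = c + 1 from by omega]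
  rw [hgoal]
  have e2 : (c + 2) ^ (n + 2) = (c + 2) ^ (n + 1) * (c + 2) := pow_succ _ _
  have e3 : (c + 2) ^ (n + 3) = (c + 2) ^ (n + 1) * (c + 2) * (c + 2) := by
    rw [pow_succ, pow_succ]
  have e4 : (c + 2) ^ (n + 1) * (c + 2) - (c + 2) ^ (n + 1) = (c + 2) ^ (n + 1) * (c + 1) := by
    have h5 : (c + 2) ^ (n + 1) * (c + 2) = (c + 2) ^ (n + 1) * (c + 1) + (c + 2) ^ (n + 1) := by
      ring
    rw [h5, Nat.add_sub_cancel]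
  have e5 : (c + 2) ^ (n + 1) * (c + 2) * (c + 2)
      = (c + 2) ^ (n + 1) * (c + 1) ^ 2
        + ((c + 2) ^ (n + 1) * (c + 2) + (c + 2) ^ (n + 1) * (c + 1)) := by
    ring
  rw [e2, e4] at hlem
  rw [e3, e5] at hrn
  linarith [hlem, hrn]
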